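/- Let Ω be a measurable subset of ℝ^N with finite Lebesgue measure and let L ∈ ℕ. For l ∈ {1,…,L}, let f^l, f^l_n : Ω → ℝ (n ∈ ℕ) be measurable functions and let g^l, g^l_n ∈ L¹(Ω) (n ∈ ℕ). Assume that for each l one has f^l_n → f^l almost everywhere in Ω and g^l_n → g^l weakly in L¹(Ω), that each sum ∑_{l=1}^L f^l_n·g^l_n belongs to L¹(Ω), and that ∑_{l=1}^L f^l_n·g^l_n → ξ weakly in L¹(Ω) for some ξ ∈ L¹(Ω). Then ξ = ∑_{l=1}^L f^l·g^l almost everywhere in Ω. (Note: the individual sequences (f^l_n·g^l_n) are not assumed to converge, only their sum.) -/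

import Mathlib

/-!
A weakly convergent sequence in `L¹` is bounded in `L¹` (uniform boundedness, pairing against
`L∞`). By Egorov, outside a set of arbitrarily small measure every `fˡₙ → fˡ` uniformly and every
`fˡ` is bounded. Testing the weak convergence of the sum against `1_S` for such a set `S`, the
error made by replacing `fˡₙ` with `fˡ` is at most `sup_S |fˡₙ - fˡ| · sup_n ‖gˡₙ‖₁ → 0`, while
`∫ 1_S fˡ gˡₙ → ∫_S fˡ gˡ` by weak convergence of `gˡₙ` alone; hence `∫_S ξ = ∫_S ∑ₗ fˡ gˡ`.
-/

open MeasureTheory Filter Topology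
open scoped ENNReal

theorem abs_indicator_le_abs {α : Type*} {S : Set α} {a : α → ℝ} {M : ℝ}
    (haM : ∀ x ∈ S, |a x| ≤ M) (x : α) : |S.indicator a x| ≤ |M| := by
  by_cases hx : x ∈ S
  · simpa [hx] using (haM x hx).trans (le_abs_self M)
  · simp [hx]

section WeakL1

variable {α : Type*} [MeasurableSpace α] {μ : Measure α}

def TendstoWeaklyL1 (μ : Measure α) (u : ℕ → α → ℝ) (v : α → ℝ) : Prop :=
  ∀ φ : α → ℝ, Measurable φ → (∃ C : ℝ, ∀ᵐ x ∂μ, |φ x| ≤ C) →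
    Tendsto (fun n => ∫ x, φ x * u n x ∂μ) atTop (𝓝 (∫ x, φ x * v x ∂μ))

theorem MeasureTheory.Lp.exists_measurable_ae_eq_abs_le (φ : Lp ℝ ∞ μ) :
    ∃ ψ : α → ℝ, Measurable ψ ∧ ψ =ᵐ[μ] φ ∧ ∀ᵐ x ∂μ, |ψ x| ≤ ‖φ‖ := by
  have hφ := (Lp.aestronglyMeasurable φ).aemeasurable
  refine ⟨hφ.mk φ, hφ.measurable_mk, hφ.ae_eq_mk.symm, ?_⟩
  filter_upwards [ae_le_lpNorm_exponent_top (Lp.memLp φ), hφ.ae_eq_mk] with x hx hmk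
  rwa [← hmk, Lp.norm_def, toReal_eLpNorm (Lp.aestronglyMeasurable φ)]

theorem exists_integral_abs_le_of_bounded_pairings {ι : Type*} {u : ι → α → ℝ}
    (hu : ∀ i, Integrable (u i) μ)
    (h : ∀ φ : α → ℝ, Measurable φ → (∃ C : ℝ, ∀ᵐ x ∂μ, |φ x| ≤ C) →
      ∃ C : ℝ, ∀ i, |∫ x, φ x * u i x ∂μ| ≤ C) :
    ∃ C : ℝ, ∀ i, ∫ x, |u i x| ∂μ ≤ C := by
  let T : ι → Lp ℝ ∞ μ →L[ℝ] ℝ := fun i =>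
    ((ContinuousLinearMap.mul ℝ ℝ).lpPairing μ ∞ 1).flip ((hu i).toL1 (u i))
  have hT : ∀ i (φ : Lp ℝ ∞ μ), T i φ = ∫ x, φ x * u i x ∂μ := fun i φ => by
    simp only [T, ContinuousLinearMap.flip_apply, ContinuousLinearMap.lpPairing_eq_integral,
      ContinuousLinearMap.mul_apply']
    exact integral_congr_ae (by filter_upwards [(hu i).coeFn_toL1] with x hx; rw [hx])
  obtain ⟨C, hC⟩ := banach_steinhaus (g := T) fun φ => by
    obtain ⟨ψ, hψ, hψφ, hψle⟩ := Lp.exists_measurable_ae_eq_abs_le φ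
    obtain ⟨C, hC⟩ := h ψ hψ ⟨_, hψle⟩
    refine ⟨C, fun i => ?_⟩
    rw [hT, Real.norm_eq_abs]
    convert hC i using 2
    exact integral_congr_ae (by filter_upwards [hψφ] with x hx; rw [hx])
  -- pairing `u i` with its sign recovers its `L¹` norm
  let sgn : ℝ → ℝ := fun t => if 0 ≤ t then 1 else -1
  have hsgn : Measurable sgn :=
    Measurable.ite measurableSet_Ici measurable_const measurable_const
  refine ⟨C, fun i => ?_⟩
  have hsgn_le : ∀ᵐ x ∂μ, ‖(sgn ∘ u i) x‖ ≤ 1 :=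
    Eventually.of_forall fun x => by by_cases h : 0 ≤ u i x <;> simp [sgn, h]
  have hs : MemLp (sgn ∘ u i) ∞ μ :=
    memLp_top_of_bound (hsgn.comp_aemeasurable (hu i).aemeasurable).aestronglyMeasurable 1
      hsgn_le
  have hs_norm : ‖hs.toLp‖ ≤ 1 := by
    rw [Lp.norm_toLp, eLpNorm_exponent_top]
    exact ENNReal.toReal_le_of_le_ofReal zero_le_one (eLpNormEssSup_le_of_ae_bound hsgn_le)
  calc ∫ x, |u i x| ∂μ = T i hs.toLp := by
        rw [hT]
        refine integral_congr_ae ?_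
        filter_upwards [hs.coeFn_toLp] with x hx
        rw [hx]
        by_cases h : 0 ≤ u i x
        · simp [sgn, h, abs_of_nonneg h]
        · simp [sgn, h, abs_of_neg (not_le.1 h)]
    _ ≤ ‖T i‖ * ‖hs.toLp‖ := (le_abs_self _).trans ((T i).le_opNorm _)
    _ ≤ C := by
        simpa using mul_le_mul (hC i) hs_norm (norm_nonneg _) ((norm_nonneg _).trans (hC i))

theorem TendstoWeaklyL1.exists_integral_abs_le {u : ℕ → α → ℝ} {v : α → ℝ}
    (h : TendstoWeaklyL1 μ u v) (hu : ∀ n, Integrable (u n) μ) :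
    ∃ C : ℝ, ∀ n, ∫ x, |u n x| ∂μ ≤ C :=
  exists_integral_abs_le_of_bounded_pairings hu fun φ hφ hφC => by
    obtain ⟨C, hC⟩ := (h φ hφ hφC).abs.bddAbove_range
    exact ⟨C, fun n => hC ⟨n, rfl⟩⟩

theorem integrable_indicator_mul {S : Set α} (hS : MeasurableSet S) {a u : α → ℝ} {M : ℝ}
    (ha : AEStronglyMeasurable a μ) (haM : ∀ x ∈ S, |a x| ≤ M) (hu : Integrable u μ) :
    Integrable (fun x => S.indicator a x * u x) μ :=
  hu.bdd_mul (ha.indicator hS) (c := |M|) <| Eventually.of_forall (abs_indicator_le_abs haM)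

theorem tendsto_integral_indicator_sub_mul {S : Set α} {a : ℕ → α → ℝ} {b : α → ℝ}
    {u : ℕ → α → ℝ} {C : ℝ} (hab : TendstoUniformlyOn a b atTop S)
    (hu : ∀ n, Integrable (u n) μ) (hC : ∀ n, ∫ x, |u n x| ∂μ ≤ C) :
    Tendsto (fun n => ∫ x, S.indicator (a n - b) x * u n x ∂μ) atTop (𝓝 0) := by
  have hC0 : 0 ≤ C := (integral_nonneg fun x => abs_nonneg (u 0 x)).trans (hC 0)
  refine Metric.tendsto_nhds.2 fun ε hε => ?_
  obtain ⟨δ, hδ, hδC⟩ : ∃ δ > 0, δ * C < ε := ⟨ε / (C + 1), by positivity, by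
    rw [div_mul_eq_mul_div, div_lt_iff₀ (by positivity)]; nlinarith⟩
  filter_upwards [Metric.tendstoUniformlyOn_iff.1 hab δ hδ] with n hn
  have hle : ∀ x, ‖S.indicator (a n - b) x * u n x‖ ≤ δ * ‖u n x‖ := fun x => by
    rw [norm_mul]
    gcongr
    by_cases hx : x ∈ S
    · simpa [hx, dist_comm, Real.dist_eq] using (hn x hx).le
    · simp [hx, hδ.le]
  calc dist (∫ x, S.indicator (a n - b) x * u n x ∂μ) 0
      ≤ ∫ x, δ * ‖u n x‖ ∂μ := by
        rw [dist_zero_right]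
        exact norm_integral_le_of_norm_le ((hu n).norm.const_mul δ) (Eventually.of_forall hle)
    _ = δ * ∫ x, |u n x| ∂μ := by simp [integral_const_mul]
    _ ≤ δ * C := by gcongr; exact hC n
    _ < ε := hδC

theorem tendsto_integral_indicator_mul {S : Set α} (hS : MeasurableSet S)
    {a : ℕ → α → ℝ} {b : α → ℝ} {u : ℕ → α → ℝ} {v : α → ℝ} {M : ℝ}
    (ha : ∀ n, AEStronglyMeasurable (a n) μ) (hb : Measurable b) (hbM : ∀ x ∈ S, |b x| ≤ M)
    (hab : TendstoUniformlyOn a b atTop S) (hu : ∀ n, Integrable (u n) μ)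
    (huv : TendstoWeaklyL1 μ u v) :
    Tendsto (fun n => ∫ x, S.indicator (a n) x * u n x ∂μ) atTop
      (𝓝 (∫ x, S.indicator b x * v x ∂μ)) := by
  obtain ⟨C, hC⟩ := huv.exists_integral_abs_le hu
  have hbu := huv _ (hb.indicator hS) ⟨|M|, Eventually.of_forall (abs_indicator_le_abs hbM)⟩
  have hlim := (tendsto_integral_indicator_sub_mul hab hu hC).add hbu
  rw [zero_add] at hlim
  refine hlim.congr' ?_
  filter_upwards [Metric.tendstoUniformlyOn_iff.1 hab 1 one_pos] with n hn
  have hdiff : ∀ x ∈ S, |(a n - b) x| ≤ 1 := fun x hx => by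
    simpa [dist_comm, Real.dist_eq] using (hn x hx).le
  rw [← integral_add
    (integrable_indicator_mul hS ((ha n).sub hb.aestronglyMeasurable) hdiff (hu n))
    (integrable_indicator_mul hS hb.aestronglyMeasurable hbM (hu n))]
  congr 1 with x
  by_cases hx : x ∈ S <;> simp [hx, sub_mul]

theorem setIntegral_eq_sum_of_tendstoUniformlyOn {ι : Type*} [Fintype ι] {S : Set α}
    (hS : MeasurableSet S) {f g : ι → α → ℝ} {fn gn : ι → ℕ → α → ℝ} {ξ : α → ℝ} {M : ℝ}
    (hf : ∀ l, Measurable (f l)) (hfn : ∀ l n, AEStronglyMeasurable (fn l n) μ)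
    (hfM : ∀ l, ∀ x ∈ S, |f l x| ≤ M) (hunif : ∀ l, TendstoUniformlyOn (fn l) (f l) atTop S)
    (hg : ∀ l, Integrable (g l) μ) (hgn : ∀ l n, Integrable (gn l n) μ)
    (hweak_g : ∀ l, TendstoWeaklyL1 μ (gn l) (g l))
    (hweak_sum : TendstoWeaklyL1 μ (fun n x => ∑ l, fn l n x * gn l n x) ξ) :
    ∫ x in S, ξ x ∂μ = ∫ x in S, ∑ l, f l x * g l x ∂μ := by
  have hsum := hweak_sum (S.indicator 1) (measurable_const.indicator hS)
    ⟨1, Eventually.of_forall fun x => by by_cases hx : x ∈ S <;> simp [hx]⟩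
  have hterms := tendsto_finsetSum Finset.univ fun l _ =>
    tendsto_integral_indicator_mul hS (hfn l) (hf l) (hfM l) (hunif l) (hgn l) (hweak_g l)
  have hsplit : ∀ᶠ n in atTop, ∫ x, S.indicator 1 x * ∑ l, fn l n x * gn l n x ∂μ =
      ∑ l, ∫ x, S.indicator (fn l n) x * gn l n x ∂μ := by
    filter_upwards
      [eventually_all.2 fun l => Metric.tendstoUniformlyOn_iff.1 (hunif l) 1 one_pos] with n hn
    have hfnM : ∀ l, ∀ x ∈ S, |fn l n x| ≤ M + 1 := fun l x hx => by
      have hd : |fn l n x - f l x| < 1 := by rw [← Real.dist_eq, dist_comm]; exact hn l x hx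
      linarith [abs_sub_abs_le_abs_sub (fn l n x) (f l x), hfM l x hx]
    rw [← integral_finsetSum _ fun l _ =>
      integrable_indicator_mul hS (hfn l n) (hfnM l) (hgn l n)]
    congr 1 with x
    by_cases hx : x ∈ S <;> simp [hx]
  have hlim := tendsto_nhds_unique (hsum.congr' hsplit) hterms
  have hfg : ∀ l, IntegrableOn (fun x => f l x * g l x) S μ := fun l =>
    (hg l).restrict.bdd_mul (hf l).aestronglyMeasurable.restrict
      (ae_restrict_of_forall_mem hS (hfM l))
  calc ∫ x in S, ξ x ∂μ = ∫ x, S.indicator 1 x * ξ x ∂μ := by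
        rw [← integral_indicator hS]
        congr 1 with x
        by_cases hx : x ∈ S <;> simp [hx]
    _ = ∑ l, ∫ x, S.indicator (f l) x * g l x ∂μ := hlim
    _ = ∑ l, ∫ x in S, f l x * g l x ∂μ := by
        simp_rw [← Set.indicator_mul_left, integral_indicator hS]
    _ = ∫ x in S, ∑ l, f l x * g l x ∂μ := (integral_finsetSum _ fun l _ => hfg l).symm

theorem ae_restrict_eq_sum_of_tendstoUniformlyOn {ι : Type*} [Fintype ι] {E : Set α}
    (hE : MeasurableSet E) {f g : ι → α → ℝ} {fn gn : ι → ℕ → α → ℝ} {ξ : α → ℝ} {M : ℝ}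
    (hf : ∀ l, Measurable (f l)) (hfn : ∀ l n, AEStronglyMeasurable (fn l n) μ)
    (hfM : ∀ l, ∀ x ∈ E, |f l x| ≤ M) (hunif : ∀ l, TendstoUniformlyOn (fn l) (f l) atTop E)
    (hg : ∀ l, Integrable (g l) μ) (hgn : ∀ l n, Integrable (gn l n) μ) (hξ : Integrable ξ μ)
    (hweak_g : ∀ l, TendstoWeaklyL1 μ (gn l) (g l))
    (hweak_sum : TendstoWeaklyL1 μ (fun n x => ∑ l, fn l n x * gn l n x) ξ) :
    ∀ᵐ x ∂μ.restrict E, ξ x = ∑ l, f l x * g l x := by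
  refine Integrable.ae_eq_of_forall_setIntegral_eq _ _ hξ.restrict
    (integrable_finsetSum _ fun l _ => (hg l).restrict.bdd_mul
      (hf l).aestronglyMeasurable.restrict (ae_restrict_of_forall_mem hE (hfM l)))
    fun s hs _ => ?_
  rw [Measure.restrict_restrict hs]
  exact setIntegral_eq_sum_of_tendstoUniformlyOn (hs.inter hE) hf hfn
    (fun l x hx => hfM l x hx.2) (fun l => (hunif l).mono Set.inter_subset_right) hg hgn
    hweak_g hweak_sum

theorem exists_measure_setOf_lt_le [IsFiniteMeasure μ] {h : α → ℝ} (hh : Measurable h)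
    {ε : ℝ≥0∞} (hε : 0 < ε) : ∃ M : ℝ, μ {x | M < h x} ≤ ε := by
  have hlim := tendsto_measure_iInter_atTop (μ := μ) (s := fun M : ℕ => {x | (M : ℝ) < h x})
    (fun M => (measurableSet_lt measurable_const hh).nullMeasurableSet)
    (fun M N hMN x hx => show (M : ℝ) < h x from (Nat.cast_le.2 hMN).trans_lt hx)
    ⟨0, measure_ne_top μ _⟩
  have hempty : (⋂ M : ℕ, {x | (M : ℝ) < h x}) = ∅ :=
    Set.eq_empty_of_forall_notMem fun x hx =>
      (exists_nat_ge (h x)).elim fun M hM => (Set.mem_iInter.1 hx M).not_ge hM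
  rw [hempty, measure_empty] at hlim
  obtain ⟨M, hM⟩ := (hlim.eventually (ge_mem_nhds hε)).exists
  exact ⟨M, hM⟩

theorem exists_tendstoUniformlyOn_of_ae_tendsto [IsFiniteMeasure μ] {ι : Type*} [Fintype ι]
    {f : ι → α → ℝ} {fn : ι → ℕ → α → ℝ} (hf : ∀ l, Measurable (f l))
    (hfn : ∀ l n, Measurable (fn l n))
    (hae : ∀ l, ∀ᵐ x ∂μ, Tendsto (fun n => fn l n x) atTop (𝓝 (f l x)))
    {ε : ℝ} (hε : 0 < ε) :
    ∃ E, MeasurableSet E ∧ μ Eᶜ ≤ ENNReal.ofReal ε ∧ (∃ M, ∀ l, ∀ x ∈ E, |f l x| ≤ M) ∧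
      ∀ l, TendstoUniformlyOn (fn l) (f l) atTop E := by
  -- Egorov for the `ι → ℝ`-valued sequence `x ↦ (fn l n x)ₗ` handles all `l` at once.
  have hF : Measurable fun x l => f l x := measurable_pi_lambda _ hf
  obtain ⟨t, ht, htε, hunif⟩ := tendstoUniformlyOn_of_ae_tendsto' (μ := μ)
    (f := fun n x l => fn l n x) (g := fun x l => f l x)
    (fun n => (measurable_pi_lambda _ fun l => hfn l n).stronglyMeasurable) hF.stronglyMeasurable
    (by filter_upwards [ae_all_iff.2 hae] with x hx using tendsto_pi_nhds.2 hx)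
    (half_pos hε)
  obtain ⟨M, hM⟩ :=
    exists_measure_setOf_lt_le (μ := μ) hF.norm (ENNReal.ofReal_pos.2 (half_pos hε))
  refine ⟨tᶜ ∩ {x | ‖fun l => f l x‖ ≤ M},
    ht.compl.inter (measurableSet_le hF.norm measurable_const), ?_,
    ⟨M, fun l x hx => (norm_le_pi_norm (fun l => f l x) l).trans hx.2⟩,
    fun l => ((Pi.uniformContinuous_proj _ l).comp_tendstoUniformlyOn hunif).mono
      Set.inter_subset_left⟩
  calc μ (tᶜ ∩ {x | ‖fun l => f l x‖ ≤ M})ᶜ = μ (t ∪ {x | M < ‖fun l => f l x‖}) := by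
        simp [Set.compl_inter, Set.compl_ofPred]
    _ ≤ ENNReal.ofReal (ε / 2) + ENNReal.ofReal (ε / 2) :=
        (measure_union_le _ _).trans (add_le_add htε hM)
    _ = ENNReal.ofReal ε := by
        rw [← ENNReal.ofReal_add (half_pos hε).le (half_pos hε).le, add_halves]

theorem ae_of_forall_exists_ae_restrict {p : α → Prop}
    (h : ∀ ε : ℝ, 0 < ε → ∃ E, μ Eᶜ ≤ ENNReal.ofReal ε ∧ ∀ᵐ x ∂μ.restrict E, p x) :
    ∀ᵐ x ∂μ, p x := by
  refine ae_iff.2 (le_antisymm (ENNReal.le_of_forall_pos_le_add fun ε hε _ => ?_) zero_le)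
  obtain ⟨E, hEc, hE⟩ := h ε hε
  calc μ {x | ¬p x} ≤ μ ({x | ¬p x} ∩ E ∪ Eᶜ) := measure_mono fun x hx => by
        by_cases hxE : x ∈ E
        exacts [Or.inl ⟨hx, hxE⟩, Or.inr hxE]
    _ ≤ μ ({x | ¬p x} ∩ E) + μ Eᶜ := measure_union_le _ _
    _ ≤ 0 + ε := by
        gcongr
        · exact (Measure.le_restrict_apply _ _).trans (ae_iff.1 hE).le
        · simpa using hEc

end WeakL1

theorem weak_ae_convergence_sums_general {N : ℕ} (Ω : Set (Fin N → ℝ))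
    (hΩfin : volume Ω < ⊤) (L : ℕ)
    (f : Fin L → (Fin N → ℝ) → ℝ) (fn : Fin L → ℕ → (Fin N → ℝ) → ℝ)
    (hf : ∀ l, Measurable (f l)) (hfn : ∀ l n, Measurable (fn l n))
    (g : Fin L → (Fin N → ℝ) → ℝ) (gn : Fin L → ℕ → (Fin N → ℝ) → ℝ)
    (ξ : (Fin N → ℝ) → ℝ)
    (hg : ∀ l, IntegrableOn (g l) Ω) (hgn : ∀ l n, IntegrableOn (gn l n) Ω)
    (hξ : IntegrableOn ξ Ω)
    (hae : ∀ l, ∀ᵐ x ∂(volume.restrict Ω),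
      Tendsto (fun n => fn l n x) atTop (nhds (f l x)))
    (hweak_g : ∀ l, ∀ φ : (Fin N → ℝ) → ℝ, Measurable φ →
      (∃ C : ℝ, ∀ᵐ x ∂(volume.restrict Ω), |φ x| ≤ C) →
      Tendsto (fun n => ∫ x in Ω, φ x * gn l n x) atTop
        (nhds (∫ x in Ω, φ x * g l x)))
    (hweak_sum : ∀ φ : (Fin N → ℝ) → ℝ, Measurable φ →
      (∃ C : ℝ, ∀ᵐ x ∂(volume.restrict Ω), |φ x| ≤ C) →
      Tendsto (fun n => ∫ x in Ω, φ x * ∑ l : Fin L, fn l n x * gn l n x) atTop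
        (nhds (∫ x in Ω, φ x * ξ x))) :
    ∀ᵐ x ∂(volume.restrict Ω), ξ x = ∑ l : Fin L, f l x * g l x := by
  have : IsFiniteMeasure (volume.restrict Ω) := isFiniteMeasure_restrict.2 hΩfin.ne
  refine ae_of_forall_exists_ae_restrict fun ε hε => ?_
  obtain ⟨E, hE, hEc, ⟨M, hM⟩, hunif⟩ := exists_tendstoUniformlyOn_of_ae_tendsto hf hfn hae hε
  exact ⟨E, hEc, ae_restrict_eq_sum_of_tendstoUniformlyOn hE hf
    (fun l n => (hfn l n).aestronglyMeasurable) hM hunif hg hgn hξ hweak_g hweak_sum⟩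

/-- **Weak–a.e. convergence for sums (Lemma A.2).**
If `Ω ⊆ ℝ^N` is measurable with finite measure, `L ∈ ℕ`, and for each
`l ∈ {1,…,L}` one has `fˡₙ → fˡ` a.e. in `Ω` and `gˡₙ ⇀ gˡ` weakly in `L¹(Ω)`,
and if `∑_{l=1}^L fˡₙ·gˡₙ ⇀ ξ` weakly in `L¹(Ω)`, then
`ξ = ∑_{l=1}^L fˡ·gˡ` a.e. in `Ω`. Weak `L¹` convergence is formulated by
testing against essentially bounded measurable functions. The individual
sequences `(fˡₙ·gˡₙ)ₙ` are not assumed to converge, only their sum. -/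
theorem weak_ae_convergence_sums {N : ℕ} (Ω : Set (Fin N → ℝ))
    (hΩ : MeasurableSet Ω) (hΩfin : volume Ω < ⊤) (L : ℕ)
    (f : Fin L → (Fin N → ℝ) → ℝ) (fn : Fin L → ℕ → (Fin N → ℝ) → ℝ)
    (hf : ∀ l, Measurable (f l)) (hfn : ∀ l n, Measurable (fn l n))
    (g : Fin L → (Fin N → ℝ) → ℝ) (gn : Fin L → ℕ → (Fin N → ℝ) → ℝ)
    (ξ : (Fin N → ℝ) → ℝ)
    (hg : ∀ l, IntegrableOn (g l) Ω) (hgn : ∀ l n, IntegrableOn (gn l n) Ω)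
    (hξ : IntegrableOn ξ Ω)
    (hae : ∀ l, ∀ᵐ x ∂(volume.restrict Ω),
      Tendsto (fun n => fn l n x) atTop (nhds (f l x)))
    (hweak_g : ∀ l, ∀ φ : (Fin N → ℝ) → ℝ, Measurable φ →
      (∃ C : ℝ, ∀ᵐ x ∂(volume.restrict Ω), |φ x| ≤ C) →
      Tendsto (fun n => ∫ x in Ω, φ x * gn l n x) atTop
        (nhds (∫ x in Ω, φ x * g l x)))
    (hsum_int : ∀ n, IntegrableOn (fun x => ∑ l : Fin L, fn l n x * gn l n x) Ω)
    (hweak_sum : ∀ φ : (Fin N → ℝ) → ℝ, Measurable φ →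
      (∃ C : ℝ, ∀ᵐ x ∂(volume.restrict Ω), |φ x| ≤ C) →
      Tendsto (fun n => ∫ x in Ω, φ x * ∑ l : Fin L, fn l n x * gn l n x) atTop
        (nhds (∫ x in Ω, φ x * ξ x))) :
    ∀ᵐ x ∂(volume.restrict Ω), ξ x = ∑ l : Fin L, f l x * g l x :=
  weak_ae_convergence_sums_general Ω hΩfin L f fn hf hfn g gn ξ hg hgn hξ hae hweak_g hweak_sum
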